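/- For a reaction network satisfying Assumptions 1 and 2, let U be an intermediate species and X, Y non-intermediate species with Y ≠ X. If a monomial y^r u, r ≥ 0, appears in x^{(ℓ)} for some ℓ ≥ 1, then either U reacts to X, or ℓ ≥ 2, the network contains a block of reactions Y+Z_w ⇄ W → Z̃_w + X with Z_w ≠ X, and a monomial y^t u with t < r appears in z_w^{(i)} for some i ≤ ℓ−2. If, in addition, Y acts as an enzyme in all the reactions of the connected component determined by U, then X ∈ 𝒮_U, the block of reactions is Y+Z_w ⇄ W → Y + X, and it is contained in the connected component determined by U. Moreover, if U does not react to X and ℓ is the smallest integer such that a monomial y^r u appears in x^{(ℓ)}, then r ≥ 1, ℓ ≥ 2, and the monomial y^{r−1} u appears in z_w^{(i)} for some i ≤ ℓ−2. -/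

import Mathlib

open MvPolynomial Finsupp

variable {σ : Type*}

/-- The total (Lie) derivative of a polynomial `φ` associated to the polynomial vector
field `f`: `φ̇ = Σ_x (∂φ/∂x)·f x`. -/
noncomputable def lieD [Fintype σ] (f : σ → MvPolynomial σ ℝ)
    (φ : MvPolynomial σ ℝ) : MvPolynomial σ ℝ :=
  ∑ x : σ, MvPolynomial.pderiv x φ * f x

/-- Iterated total (Lie) derivative. -/
noncomputable def lieDIter [Fintype σ] (f : σ → MvPolynomial σ ℝ) :
    ℕ → MvPolynomial σ ℝ → MvPolynomial σ ℝ
  | 0, φ => φ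
  | n + 1, φ => lieD f (lieDIter f n φ)

/-- Indicator of a species inside a complex, as a real number. -/
def ind [DecidableEq σ] (a x : σ) : ℝ := if a = x then 1 else 0

/-- A chemical reaction network of the structural form of Assumption 1: the connected
components are indexed by `ι`; component `i` is
`Y i + S i 0 ⇄ U i 1 → Y i + S i 1 ⇄ U i 2 → ⋯ ⇄ U i (L i) → Y i + S i (L i)`,
with rate constants `a_{i,j}, b_{i,j}, c_{i,j}` for the reactions
`Y i + S i (j-1) → U i j`, `U i j → Y i + S i (j-1)`, `U i j → Y i + S i j`
(`1 ≤ j ≤ L i`). Only the values `S i j` for `j ≤ L i` and `U i j` for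
`1 ≤ j ≤ L i` are relevant. -/
structure A1Network (σ : Type*) where
  ι : Type
  [fintypeι : Fintype ι]
  L : ι → ℕ
  Lpos : ∀ i, 1 ≤ L i
  Y : ι → σ
  S : ι → ℕ → σ
  U : ι → ℕ → σ

attribute [instance] A1Network.fintypeι

namespace A1Network

variable [Fintype σ] [DecidableEq σ]

/-- Rate-constant index: component `i`, block `j+1` (for `j : Fin (L i)`), and
`0, 1, 2` for the constants `a, b, c` of the block. -/
def Param (N : A1Network σ) : Type := (i : N.ι) × Fin (N.L i) × Fin 3

instance (N : A1Network σ) : Fintype N.Param :=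
  inferInstanceAs (Fintype ((i : N.ι) × Fin (N.L i) × Fin 3))

/-- `x` is an intermediate species of the network. -/
def inter (N : A1Network σ) (x : σ) : Prop :=
  ∃ i, ∃ j : Fin (N.L i), x = N.U i ((j : ℕ) + 1)

/-- The non-intermediate `x₁` reacts with the non-intermediate `x₂`
(a reaction `x₁ + x₂ → U` exists). -/
def reactsWith (N : A1Network σ) (x₁ x₂ : σ) : Prop :=
  ∃ i, ∃ j : Fin (N.L i),
    (x₁ = N.Y i ∧ x₂ = N.S i (j : ℕ)) ∨ (x₂ = N.Y i ∧ x₁ = N.S i (j : ℕ))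

/-- The intermediate `u` reacts to the non-intermediate `x`
(a reaction `u → x + X₂` exists). -/
def reactsTo (N : A1Network σ) (u x : σ) : Prop :=
  ∃ i, ∃ j : Fin (N.L i), u = N.U i ((j : ℕ) + 1) ∧
    (x = N.Y i ∨ x = N.S i (j : ℕ) ∨ x = N.S i ((j : ℕ) + 1))

/-- The distinctness/uniqueness requirements of Assumption 1: the intermediates of the
entire network are pairwise distinct and distinct from all non-intermediates; the
non-intermediates of one component are pairwise distinct; each complex lies in a
unique connected component. -/
structure Assumption1 (N : A1Network σ) : Prop where
  U_inj : ∀ i (j : Fin (N.L i)) i' (j' : Fin (N.L i')),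
    N.U i ((j : ℕ) + 1) = N.U i' ((j' : ℕ) + 1) → i = i' ∧ (j : ℕ) = (j' : ℕ)
  U_ne_Y : ∀ i (j : Fin (N.L i)) i', N.U i ((j : ℕ) + 1) ≠ N.Y i'
  U_ne_S : ∀ i (j : Fin (N.L i)) i' j', j' ≤ N.L i' → N.U i ((j : ℕ) + 1) ≠ N.S i' j'
  S_inj : ∀ i j j', j ≤ N.L i → j' ≤ N.L i → N.S i j = N.S i j' → j = j'
  complex_unique : ∀ i i' j j', j ≤ N.L i → j' ≤ N.L i' →
    (∀ x : σ, ind (N.Y i) x + ind (N.S i j) x = ind (N.Y i') x + ind (N.S i' j') x) →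
    i = i'

/-- `part` is a partition of the species as in Assumption 2: intermediates form class `0`;
all the substrates and products of a component lie in one class `α ≥ 1` which contains
neither the enzyme of the component nor any intermediate. -/
def IsPartition (N : A1Network σ) (part : σ → ℕ) : Prop :=
  (∀ x, N.inter x → part x = 0) ∧
  (∀ i : N.ι, ∃ α, 1 ≤ α ∧ (∀ j, j ≤ N.L i → part (N.S i j) = α) ∧
    part (N.Y i) ≠ α ∧ part (N.Y i) ≠ 0)

/-- Assumption 2: there exists a partition as above. -/
def Assumption2 (N : A1Network σ) : Prop := ∃ part, N.IsPartition part

/-- The mass-action right-hand side of the induced dynamical system: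
`ẋ = Σ_{y→y'} k_{yy'} x^y (y'-y)`. -/
noncomputable def rhs (N : A1Network σ) (k : N.Param → ℝ) (x : σ) : MvPolynomial σ ℝ :=
  ∑ i : N.ι, ∑ j : Fin (N.L i),
    (C (k ⟨i, j, 0⟩ *
          (ind (N.U i ((j : ℕ) + 1)) x - ind (N.Y i) x - ind (N.S i (j : ℕ)) x)) *
        (X (N.Y i) * X (N.S i (j : ℕ)))
      + C (k ⟨i, j, 1⟩ *
          (ind (N.Y i) x + ind (N.S i (j : ℕ)) x - ind (N.U i ((j : ℕ) + 1)) x)) *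
        X (N.U i ((j : ℕ) + 1))
      + C (k ⟨i, j, 2⟩ *
          (ind (N.Y i) x + ind (N.S i ((j : ℕ) + 1)) x - ind (N.U i ((j : ℕ) + 1)) x)) *
        X (N.U i ((j : ℕ) + 1)))

/-- `x^{(ℓ)}(x, k)`: the `ℓ`-th iterated total derivative of the variable `x`. -/
noncomputable def deriv (N : A1Network σ) (k : N.Param → ℝ) (ℓ : ℕ) (x : σ) :
    MvPolynomial σ ℝ :=
  lieDIter (N.rhs k) ℓ (X x)

/-- The map `ψ` on rate constants is identifiable from the set of variables `T` with `D`
derivatives: whenever two positive rate vectors give the same derivatives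
`x^{(ℓ)}`, `1 ≤ ℓ ≤ D`, `x ∈ T`, as polynomials, the values of `ψ` agree. -/
def IdentifiableFrom {α : Type*} (N : A1Network σ) (ψ : (N.Param → ℝ) → α)
    (T : Set σ) (D : ℕ) : Prop :=
  ∀ k₁ k₂ : N.Param → ℝ, (∀ r, 0 < k₁ r) → (∀ r, 0 < k₂ r) →
    (∀ x ∈ T, ∀ ℓ, 1 ≤ ℓ → ℓ ≤ D → N.deriv k₁ ℓ x = N.deriv k₂ ℓ x) →
    ψ k₁ = ψ k₂

end A1Network

/-!
Fix the non-intermediate `y` and follow only the monomials `y ^ s * w` of the derivatives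
`z^{(p)}`. One derivative turns `y ^ s * w` into `y ^ (s + δ) * w'` exactly when `y ^ δ * w'` is
a monomial of `ẇ` (a `Hop`), and pure powers of `y` never occur. The coefficient of `y ^ s * w`
in `z^{(p)}` has the sign `(-1) ^ p * sgn z * sgn w`, `sgn` being `-1` on intermediates, so
contributions never cancel: `y ^ s * w` appears in `z^{(p)}` iff some walk of `p` hops leads
from `z` to `w` collecting `s` factors `y`.

The theorem is then about walks from `x` to `u`. After its last visit to `x`, such a walk enters
an intermediate `W` that reacts to `x`, stays there for a while, and moves on, collecting one
factor `y`, to the partner `z_w` of `y` in the formation `Y + Z_w → W`; the rest is a walk from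
`z_w` to `u`. Cutting out the part before the last visit to `x` leaves a walk from `x` to `u`, so
in a walk of minimal length that visit is the start, and the rest of the walk collects all but
one factor `y`. If `y` is the enzyme of the component of `u`, a walk ending at `u` never leaves
that component.
-/

lemma ind_self [DecidableEq σ] (a : σ) : ind a a = 1 := if_pos rfl

lemma ind_of_ne [DecidableEq σ] {a x : σ} (h : a ≠ x) : ind a x = 0 := if_neg h

lemma Fintype.sum_ne_zero_iff_of_mul_nonneg {ι : Type*} [Fintype ι] {f : ι → ℝ} {c : ℝ}
    (hc : c ≠ 0) (h : ∀ i, 0 ≤ c * f i) : ∑ i, f i ≠ 0 ↔ ∃ i, f i ≠ 0 := by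
  rw [← mul_ne_zero_iff_left hc, Finset.mul_sum, Ne, Fintype.sum_eq_zero_iff_of_nonneg h]
  simp [funext_iff, hc]

namespace Finsupp

variable {y v : σ} {s : ℕ}

lemma single_add_single_le_iff {a b : σ} (hab : a ≠ b) (hvy : v ≠ y) :
    single a 1 + single b 1 ≤ single y s + single v 1 ↔
      ((a = y ∧ b = v) ∨ (a = v ∧ b = y)) ∧ 1 ≤ s := by
  classical
  constructor
  · intro h
    have ha := Finsupp.le_def.1 h a
    have hb := Finsupp.le_def.1 h b
    simp only [Finsupp.add_apply, single_apply] at ha hb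
    split_ifs at ha hb <;> subst_vars <;> simp_all
  · rintro ⟨⟨rfl, rfl⟩ | ⟨rfl, rfl⟩, hs⟩ <;> intro t <;>
      simp only [Finsupp.add_apply, single_apply] <;> split_ifs <;> omega

lemma eq_or_eq_of_single_le {a : σ} (h : single a 1 ≤ single y s + single v 1) :
    a = y ∨ a = v := by
  classical
  have := Finsupp.le_def.1 h a
  simp only [Finsupp.add_apply, single_apply] at this
  split_ifs at this <;> simp_all

lemma single_add_single_tsub (hvy : v ≠ y) :
    single y s + single v 1 - (single y 1 + single v 1) = single y (s - 1) := by
  classical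
  ext t
  simp only [Finsupp.tsub_apply, Finsupp.add_apply, single_apply]
  split_ifs <;> simp_all

lemma single_add_single_eq_single_iff (hvy : v ≠ y) {z : σ} :
    single y s + single v 1 = single z 1 ↔ s = 0 ∧ v = z := by
  classical
  constructor
  · intro h
    have hy := DFunLike.congr_fun h y
    have hv := DFunLike.congr_fun h v
    simp only [Finsupp.add_apply, single_apply] at hy hv
    split_ifs at hy hv <;> simp_all
  · rintro ⟨rfl, rfl⟩
    simp

lemma eq_of_single_add_single_le_single {a b : σ} (h : single a 1 + single b 1 ≤ single y s) :
    a = y ∧ b = y := by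
  classical
  have ha := Finsupp.le_def.1 h a
  have hb := Finsupp.le_def.1 h b
  simp only [Finsupp.add_apply, single_apply] at ha hb
  constructor <;> by_contra hne <;> simp_all [eq_comm]

lemma eq_of_single_le_single {a : σ} (h : single a 1 ≤ single y s) : a = y := by
  classical
  have := Finsupp.le_def.1 h a
  simp only [single_apply] at this
  split_ifs at this <;> simp_all

end Finsupp

namespace A1Network

lemma inter_U (N : A1Network σ) (i : N.ι) (j : Fin (N.L i)) : N.inter (N.U i (j + 1)) :=
  ⟨i, j, rfl⟩

lemma U_ne_of_not_inter {N : A1Network σ} {w : σ} (hw : ¬ N.inter w) (i : N.ι)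
    (j : Fin (N.L i)) : N.U i (j + 1) ≠ w :=
  fun h => hw (h ▸ inter_U N i j)

def IsReactant (N : A1Network σ) (i : N.ι) (j : Fin (N.L i)) (a b : σ) : Prop :=
  (a = N.Y i ∧ b = N.S i j) ∨ (a = N.S i j ∧ b = N.Y i)

lemma Assumption1.S_ne_S_succ [DecidableEq σ] {N : A1Network σ} (h1 : N.Assumption1) (i : N.ι)
    (j : Fin (N.L i)) : N.S i j ≠ N.S i (j + 1) :=
  fun h => by simpa using h1.S_inj i j (j + 1) j.isLt.le j.isLt h

namespace Assumption2

variable {N : A1Network σ}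

lemma not_inter_Y (h2 : N.Assumption2) (i : N.ι) : ¬ N.inter (N.Y i) := by
  obtain ⟨part, hinter, hcomp⟩ := h2
  obtain ⟨α, -, -, -, hY0⟩ := hcomp i
  exact fun h => hY0 (hinter _ h)

lemma not_inter_S (h2 : N.Assumption2) {i : N.ι} {j : ℕ} (hj : j ≤ N.L i) :
    ¬ N.inter (N.S i j) := by
  obtain ⟨part, hinter, hcomp⟩ := h2
  obtain ⟨α, hα, hS, -, -⟩ := hcomp i
  intro h
  have := hinter _ h
  rw [hS j hj] at this
  omega

lemma Y_ne_S (h2 : N.Assumption2) {i : N.ι} {j : ℕ} (hj : j ≤ N.L i) : N.Y i ≠ N.S i j := by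
  obtain ⟨part, -, hcomp⟩ := h2
  obtain ⟨α, -, hS, hY, -⟩ := hcomp i
  exact fun h => hY (h ▸ hS j hj)

lemma not_inter_of_eq_Y_or_S (h2 : N.Assumption2) {i : N.ι} {j : Fin (N.L i)} {w : σ}
    (hw : w = N.Y i ∨ w = N.S i j ∨ w = N.S i (j + 1)) : ¬ N.inter w := by
  rcases hw with rfl | rfl | rfl
  exacts [h2.not_inter_Y i, h2.not_inter_S j.isLt.le, h2.not_inter_S j.isLt]

end Assumption2

namespace IsReactant

variable {N : A1Network σ} {i : N.ι} {j : Fin (N.L i)} {a b : σ}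

lemma ne (h2 : N.Assumption2) (h : N.IsReactant i j a b) : b ≠ a := by
  rcases h with ⟨rfl, rfl⟩ | ⟨rfl, rfl⟩
  exacts [(h2.Y_ne_S j.isLt.le).symm, h2.Y_ne_S j.isLt.le]

lemma not_inter (h2 : N.Assumption2) (h : N.IsReactant i j a b) : ¬ N.inter b := by
  rcases h with ⟨-, rfl⟩ | ⟨-, rfl⟩
  exacts [h2.not_inter_S j.isLt.le, h2.not_inter_Y i]

lemma eq_of_enzyme [DecidableEq σ] (h1 : N.Assumption1) (h2 : N.Assumption2) {iu : N.ι}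
    (hyY : a = N.Y iu) (hr : N.IsReactant i j a b) {jv : ℕ} (hjv : jv ≤ N.L iu)
    (hb : b = N.S iu jv) : i = iu ∧ a = N.Y i := by
  have hi : i = iu := by
    refine h1.complex_unique i iu j jv j.isLt.le hjv fun t => ?_
    rcases hr with ⟨h, h'⟩ | ⟨h, h'⟩
    · rw [← h, ← h', ← hyY, ← hb]
    · rw [← h, ← h', ← hyY, ← hb, add_comm]
  subst hi
  refine ⟨rfl, ?_⟩
  rcases hr with ⟨h, -⟩ | ⟨-, h'⟩
  · exact h
  · exact absurd (h'.symm.trans hb) (h2.Y_ne_S hjv)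

end IsReactant

lemma Assumption1.eq_S_succ_of_reactsTo [DecidableEq σ] {N : A1Network σ} (h1 : N.Assumption1)
    {i : N.ι} {j : Fin (N.L i)} {x y zw : σ} (hxij : N.reactsTo (N.U i (j + 1)) x)
    (hr : N.IsReactant i j y zw) (hyx : y ≠ x) (hzx : zw ≠ x) : x = N.S i (j + 1) := by
  obtain ⟨i', j', hU, hadj⟩ := hxij
  obtain ⟨rfl, hjj⟩ := h1.U_inj i j i' j' hU
  obtain rfl : j = j' := Fin.ext hjj
  rcases hadj with rfl | rfl | h
  · rcases hr with ⟨rfl, -⟩ | ⟨-, rfl⟩ <;> contradiction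
  · rcases hr with ⟨-, rfl⟩ | ⟨rfl, -⟩ <;> contradiction
  · exact h

open Classical in
noncomputable def sgn (N : A1Network σ) (w : σ) : ℝ := if N.inter w then -1 else 1

lemma sgn_of_inter {N : A1Network σ} {w : σ} (hw : N.inter w) : N.sgn w = -1 := by
  simp [sgn, hw]

lemma sgn_of_not_inter {N : A1Network σ} {w : σ} (hw : ¬ N.inter w) : N.sgn w = 1 := by
  simp [sgn, hw]

lemma sgn_ne_zero (N : A1Network σ) (w : σ) : N.sgn w ≠ 0 := by
  unfold sgn; split_ifs <;> norm_num

lemma sgn_mul_self (N : A1Network σ) (w : σ) : N.sgn w * N.sgn w = 1 := by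
  unfold sgn; split_ifs <;> norm_num

/-- `N.Hop y i j w w' δ`: through the block `(i, j)`, `y ^ δ * w'` is a monomial of `ẇ`, so that a
monomial `y ^ s * w` of `φ` gives rise to `y ^ (s + δ) * w'` in `φ̇`. -/
inductive Hop (N : A1Network σ) (y : σ) (i : N.ι) (j : Fin (N.L i)) : σ → σ → ℕ → Prop
  | decay : N.Hop y i j (N.U i (j + 1)) (N.U i (j + 1)) 0
  | release {w : σ} (hw : w = N.Y i ∨ w = N.S i j ∨ w = N.S i (j + 1)) (hwy : w ≠ y) :
      N.Hop y i j w (N.U i (j + 1)) 0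
  | bind {v : σ} (hv : N.IsReactant i j y v) : N.Hop y i j v v 1
  | form {v : σ} (hv : N.IsReactant i j y v) : N.Hop y i j (N.U i (j + 1)) v 1

lemma Hop.src_ne {N : A1Network σ} {y : σ} {i : N.ι} {j : Fin (N.L i)} {w w' : σ} {δ : ℕ}
    (h2 : N.Assumption2) (hy : ¬ N.inter y) (hop : N.Hop y i j w w' δ) : w ≠ y := by
  cases hop with
  | decay | form => exact U_ne_of_not_inter hy i j
  | release _ hwy => exact hwy
  | bind hv => exact hv.ne h2

inductive Reach (N : A1Network σ) (y z : σ) : ℕ → σ → ℕ → Prop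
  | refl : N.Reach y z 0 z 0
  | tail {p : ℕ} {w : σ} {d : ℕ} {i : N.ι} {j : Fin (N.L i)} {w' : σ} {δ : ℕ} :
      N.Reach y z p w d → N.Hop y i j w w' δ → N.Reach y z (p + 1) w' (d + δ)

def SignCoherent (N : A1Network σ) (y : σ) (τ : ℝ) (φ : MvPolynomial σ ℝ) : Prop :=
  ∀ s w, w ≠ y → 0 ≤ τ * N.sgn w * coeff (single y s + single w 1) φ

section Terms

variable [DecidableEq σ] (N : A1Network σ) (k : N.Param → ℝ)

noncomputable def lieTerm (m : σ →₀ ℕ) (φ : MvPolynomial σ ℝ) (w : σ) (i : N.ι)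
    (j : Fin (N.L i)) : ℝ :=
  coeff m (pderiv w φ *
    (C (k ⟨i, j, 0⟩ * (ind (N.U i (j + 1)) w - ind (N.Y i) w - ind (N.S i j) w)) *
        (X (N.Y i) * X (N.S i j))
      + C (k ⟨i, j, 1⟩ * (ind (N.Y i) w + ind (N.S i j) w - ind (N.U i (j + 1)) w)) *
        X (N.U i (j + 1))
      + C (k ⟨i, j, 2⟩ * (ind (N.Y i) w + ind (N.S i (j + 1)) w - ind (N.U i (j + 1)) w)) *
        X (N.U i (j + 1))))

lemma coeff_lieD_rhs [Fintype σ] (m : σ →₀ ℕ) (φ : MvPolynomial σ ℝ) :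
    coeff m (lieD (N.rhs k) φ) =
      ∑ q : σ × (Σ i, Fin (N.L i)), N.lieTerm k m φ q.1 q.2.1 q.2.2 := by
  simp only [lieD, rhs, lieTerm, coeff_sum, Finset.mul_sum, Fintype.sum_prod_type,
    Fintype.sum_sigma]

lemma lieTerm_eq (m : σ →₀ ℕ) (φ : MvPolynomial σ ℝ) (w : σ) (i : N.ι) (j : Fin (N.L i)) :
    N.lieTerm k m φ w i j =
      (if single (N.Y i) 1 + single (N.S i j) 1 ≤ m then
          coeff (m - (single (N.Y i) 1 + single (N.S i j) 1) + single w 1) φ *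
            (((m - (single (N.Y i) 1 + single (N.S i j) 1) : σ →₀ ℕ) w : ℝ) + 1)
        else 0) *
        (k ⟨i, j, 0⟩ * (ind (N.U i (j + 1)) w - ind (N.Y i) w - ind (N.S i j) w))
      + (if single (N.U i (j + 1)) 1 ≤ m then
          coeff (m - single (N.U i (j + 1)) 1 + single w 1) φ *
            (((m - single (N.U i (j + 1)) 1 : σ →₀ ℕ) w : ℝ) + 1)
        else 0) *
        (k ⟨i, j, 1⟩ * (ind (N.Y i) w + ind (N.S i j) w - ind (N.U i (j + 1)) w)
          + k ⟨i, j, 2⟩ * (ind (N.Y i) w + ind (N.S i (j + 1)) w - ind (N.U i (j + 1)) w)) := by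
  simp only [lieTerm, X, monomial_mul, C_mul_monomial, mul_one, add_mul, mul_add, coeff_add,
    coeff_mul_monomial', coeff_pderiv]
  split_ifs <;> ring

end Terms

section TermValues

variable [DecidableEq σ] {N : A1Network σ} {k : N.Param → ℝ} {y : σ} {s : ℕ}
  {φ : MvPolynomial σ ℝ} {w₀ : σ} {i : N.ι} {j : Fin (N.L i)}

lemma lieTerm_single (h2 : N.Assumption2) (hy : ¬ N.inter y) :
    N.lieTerm k (single y s) φ w₀ i j = 0 := by
  have hquad : ¬ single (N.Y i) 1 + single (N.S i j) 1 ≤ single y s := fun h => by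
    obtain ⟨hY, hS⟩ := eq_of_single_add_single_le_single h
    exact h2.Y_ne_S j.isLt.le (hY.trans hS.symm)
  have hlin : ¬ single (N.U i (j + 1)) 1 ≤ single y s := fun h =>
    U_ne_of_not_inter hy i j (eq_of_single_le_single h)
  rw [lieTerm_eq, if_neg hquad, if_neg hlin]
  ring

open Classical in
lemma lieTerm_of_not_inter (h2 : N.Assumption2) (hy : ¬ N.inter y) {v : σ} (hv : ¬ N.inter v)
    (hvy : v ≠ y) :
    N.lieTerm k (single y s + single v 1) φ w₀ i j =
      if N.IsReactant i j y v ∧ 1 ≤ s then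
        coeff (single y (s - 1) + single w₀ 1) φ * ((single y (s - 1) w₀ : ℝ) + 1) *
          (k ⟨i, j, 0⟩ * (ind (N.U i (j + 1)) w₀ - ind (N.Y i) w₀ - ind (N.S i j) w₀))
      else 0 := by
  have hlin : ¬ single (N.U i (j + 1)) 1 ≤ single y s + single v 1 := fun h =>
    (eq_or_eq_of_single_le h).elim (U_ne_of_not_inter hy i j) (U_ne_of_not_inter hv i j)
  have hquad : single (N.Y i) 1 + single (N.S i j) 1 ≤ single y s + single v 1 ↔
      N.IsReactant i j y v ∧ 1 ≤ s := by
    rw [single_add_single_le_iff (h2.Y_ne_S j.isLt.le) hvy, IsReactant]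
    tauto
  rw [lieTerm_eq, if_neg hlin, zero_mul, add_zero]
  by_cases hr : N.IsReactant i j y v ∧ 1 ≤ s
  · have hsub : single y s + single v 1 - (single (N.Y i) 1 + single (N.S i j) 1) =
        single y (s - 1) := by
      rcases hr.1 with ⟨rfl, rfl⟩ | ⟨rfl, rfl⟩
      · exact single_add_single_tsub hvy
      · rw [add_comm (single (N.Y i) 1)]; exact single_add_single_tsub hvy
    rw [if_pos (hquad.2 hr), if_pos hr, hsub]
  · rw [if_neg (mt hquad.1 hr), if_neg hr, zero_mul]

lemma lieTerm_of_inter (h2 : N.Assumption2) (hy : ¬ N.inter y) {w : σ} (hw : N.inter w) :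
    N.lieTerm k (single y s + single w 1) φ w₀ i j =
      if N.U i (j + 1) = w then
        coeff (single y s + single w₀ 1) φ * ((single y s w₀ : ℝ) + 1) *
          (k ⟨i, j, 1⟩ * (ind (N.Y i) w₀ + ind (N.S i j) w₀ - ind (N.U i (j + 1)) w₀)
            + k ⟨i, j, 2⟩ *
              (ind (N.Y i) w₀ + ind (N.S i (j + 1)) w₀ - ind (N.U i (j + 1)) w₀))
      else 0 := by
  have hwy : w ≠ y := fun h => hy (h ▸ hw)
  have hquad : ¬ single (N.Y i) 1 + single (N.S i j) 1 ≤ single y s + single w 1 := fun h => by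
    rcases ((single_add_single_le_iff (h2.Y_ne_S j.isLt.le) hwy).1 h).1 with
      ⟨-, hS⟩ | ⟨hY, -⟩
    · exact h2.not_inter_S j.isLt.le (hS ▸ hw)
    · exact h2.not_inter_Y i (hY ▸ hw)
  have hlin : single (N.U i (j + 1)) 1 ≤ single y s + single w 1 ↔ N.U i (j + 1) = w :=
    ⟨fun h => (eq_or_eq_of_single_le h).resolve_left (U_ne_of_not_inter hy i j),
      fun h => h ▸ le_add_self⟩
  rw [lieTerm_eq, if_neg hquad, zero_mul, zero_add]
  by_cases hU : N.U i (j + 1) = w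
  · subst hU
    rw [if_pos (hlin.2 rfl), if_pos rfl, add_tsub_cancel_right]
  · rw [if_neg (mt hlin.1 hU), if_neg hU, zero_mul]

end TermValues

section TermCases

variable [DecidableEq σ] {N : A1Network σ} {y : σ} {φ : MvPolynomial σ ℝ}

lemma lieTerm_cases (h2 : N.Assumption2) (hy : ¬ N.inter y)
    (hφ : ∀ t, coeff (single y t) φ = 0) {w : σ} (hwy : w ≠ y) (k : N.Param → ℝ) (s : ℕ)
    (w₀ : σ) (i : N.ι) (j : Fin (N.L i)) :
    N.lieTerm k (single y s + single w 1) φ w₀ i j = 0 ∨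
      ∃ s₀ δ, s = s₀ + δ ∧ N.Hop y i j w₀ w δ := by
  by_cases hw : N.inter w
  · rw [lieTerm_of_inter h2 hy hw]
    split_ifs with hU
    · subst hU
      by_cases hw₀y : w₀ = y
      · subst hw₀y
        rw [← single_add, hφ, zero_mul, zero_mul]
        exact Or.inl rfl
      by_cases hw₀U : w₀ = N.U i (j + 1)
      · subst hw₀U
        exact Or.inr ⟨s, 0, rfl, Hop.decay⟩
      by_cases hadj : w₀ = N.Y i ∨ w₀ = N.S i j ∨ w₀ = N.S i (j + 1)
      · exact Or.inr ⟨s, 0, rfl, Hop.release hadj hw₀y⟩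
      simp only [not_or] at hadj
      left
      simp [ind, Ne.symm hadj.1, Ne.symm hadj.2.1, Ne.symm hadj.2.2, Ne.symm hw₀U]
    · exact Or.inl rfl
  · rw [lieTerm_of_not_inter h2 hy hw hwy]
    split_ifs with hr
    · by_cases hw₀y : w₀ = y
      · subst hw₀y
        rw [← single_add, Nat.sub_add_cancel hr.2, hφ, zero_mul, zero_mul]
        exact Or.inl rfl
      by_cases hw₀w : w₀ = w
      · subst hw₀w
        exact Or.inr ⟨s - 1, 1, by omega, Hop.bind hr.1⟩
      by_cases hw₀U : w₀ = N.U i (j + 1)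
      · subst hw₀U
        exact Or.inr ⟨s - 1, 1, by omega, Hop.form hr.1⟩
      left
      have hY : N.Y i ≠ w₀ := by rcases hr.1 with ⟨rfl, -⟩ | ⟨-, rfl⟩ <;> tauto
      have hS : N.S i j ≠ w₀ := by rcases hr.1 with ⟨-, rfl⟩ | ⟨rfl, -⟩ <;> tauto
      simp [ind, hY, hS, Ne.symm hw₀U]
    · exact Or.inl rfl

end TermCases

section TermOfHop

variable [DecidableEq σ] {N : A1Network σ} {k : N.Param → ℝ} {y : σ} {s : ℕ}
  {φ : MvPolynomial σ ℝ} {i : N.ι} {j : Fin (N.L i)}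

lemma lieTerm_decay (h2 : N.Assumption2) (hy : ¬ N.inter y) :
    N.lieTerm k (single y s + single (N.U i (j + 1)) 1) φ (N.U i (j + 1)) i j =
      -(k ⟨i, j, 1⟩ + k ⟨i, j, 2⟩) * coeff (single y s + single (N.U i (j + 1)) 1) φ := by
  rw [lieTerm_of_inter h2 hy (inter_U N i j), if_pos rfl,
    single_eq_of_ne (U_ne_of_not_inter hy i j), ind_self, ind_of_ne (U_ne_of_not_inter (h2.not_inter_Y i) i j).symm,
    ind_of_ne (U_ne_of_not_inter (h2.not_inter_S j.isLt.le) i j).symm,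
    ind_of_ne (U_ne_of_not_inter (h2.not_inter_S j.isLt) i j).symm]
  push_cast
  ring

lemma lieTerm_release (h1 : N.Assumption1) (h2 : N.Assumption2) (hk : ∀ r, 0 < k r)
    (hy : ¬ N.inter y) {w : σ} (hw : w = N.Y i ∨ w = N.S i j ∨ w = N.S i (j + 1))
    (hwy : w ≠ y) : ∃ c, 0 < c ∧
      N.lieTerm k (single y s + single (N.U i (j + 1)) 1) φ w i j =
        c * coeff (single y s + single w 1) φ := by
  have hYS : N.Y i ≠ N.S i j := h2.Y_ne_S j.isLt.le
  have hYS' : N.Y i ≠ N.S i (j + 1) := h2.Y_ne_S j.isLt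
  have hSS' : N.S i j ≠ N.S i (j + 1) := h1.S_ne_S_succ i j
  rw [lieTerm_of_inter h2 hy (inter_U N i j), if_pos rfl, single_eq_of_ne hwy,
    ind_of_ne (U_ne_of_not_inter (h2.not_inter_of_eq_Y_or_S hw) i j)]
  rcases hw with rfl | rfl | rfl
  · refine ⟨k ⟨i, j, 1⟩ + k ⟨i, j, 2⟩, add_pos (hk _) (hk _), ?_⟩
    rw [ind_self, ind_of_ne hYS.symm, ind_of_ne hYS'.symm]
    push_cast
    ring
  · refine ⟨k ⟨i, j, 1⟩, hk _, ?_⟩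
    rw [ind_self, ind_of_ne hYS, ind_of_ne hSS'.symm]
    push_cast
    ring
  · refine ⟨k ⟨i, j, 2⟩, hk _, ?_⟩
    rw [ind_self, ind_of_ne hYS', ind_of_ne hSS']
    push_cast
    ring

lemma lieTerm_bind (h2 : N.Assumption2) (hy : ¬ N.inter y) {v : σ} (hv : N.IsReactant i j y v) :
    N.lieTerm k (single y (s + 1) + single v 1) φ v i j =
      -k ⟨i, j, 0⟩ * coeff (single y s + single v 1) φ := by
  have hvy := hv.ne h2
  rw [lieTerm_of_not_inter h2 hy (hv.not_inter h2) hvy, if_pos ⟨hv, by omega⟩,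
    Nat.add_sub_cancel, single_eq_of_ne hvy]
  rcases hv with ⟨rfl, rfl⟩ | ⟨rfl, rfl⟩
  · rw [ind_self, ind_of_ne (U_ne_of_not_inter (h2.not_inter_S j.isLt.le) i j),
      ind_of_ne (h2.Y_ne_S j.isLt.le)]
    push_cast
    ring
  · rw [ind_self, ind_of_ne (U_ne_of_not_inter (h2.not_inter_Y i) i j),
      ind_of_ne (h2.Y_ne_S j.isLt.le).symm]
    push_cast
    ring

lemma lieTerm_form (h2 : N.Assumption2) (hy : ¬ N.inter y) {v : σ} (hv : N.IsReactant i j y v) :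
    N.lieTerm k (single y (s + 1) + single v 1) φ (N.U i (j + 1)) i j =
      k ⟨i, j, 0⟩ * coeff (single y s + single (N.U i (j + 1)) 1) φ := by
  rw [lieTerm_of_not_inter h2 hy (hv.not_inter h2) (hv.ne h2), if_pos ⟨hv, by omega⟩,
    Nat.add_sub_cancel, single_eq_of_ne (U_ne_of_not_inter hy i j), ind_self,
    ind_of_ne (U_ne_of_not_inter (h2.not_inter_Y i) i j).symm,
    ind_of_ne (U_ne_of_not_inter (h2.not_inter_S j.isLt.le) i j).symm]
  push_cast
  ring

lemma lieTerm_of_hop (h1 : N.Assumption1) (h2 : N.Assumption2) (hk : ∀ r, 0 < k r)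
    (hy : ¬ N.inter y) {w₀ w : σ} {δ : ℕ} (hop : N.Hop y i j w₀ w δ) :
    ∃ c, 0 < c ∧ N.lieTerm k (single y (s + δ) + single w 1) φ w₀ i j =
      -(N.sgn w₀ * N.sgn w) * c * coeff (single y s + single w₀ 1) φ := by
  have hU := inter_U N i j
  cases hop with
  | decay =>
    refine ⟨k ⟨i, j, 1⟩ + k ⟨i, j, 2⟩, add_pos (hk _) (hk _), ?_⟩
    rw [add_zero, lieTerm_decay h2 hy, sgn_of_inter hU]
    ring
  | release hw hwy =>
    obtain ⟨c, hc, he⟩ := lieTerm_release h1 h2 hk hy hw hwy (s := s) (φ := φ)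
    refine ⟨c, hc, ?_⟩
    rw [add_zero, he, sgn_of_inter hU, sgn_of_not_inter (h2.not_inter_of_eq_Y_or_S hw)]
    ring
  | bind hv =>
    refine ⟨k ⟨i, j, 0⟩, hk _, ?_⟩
    rw [lieTerm_bind h2 hy hv, sgn_of_not_inter (hv.not_inter h2)]
    ring
  | form hv =>
    refine ⟨k ⟨i, j, 0⟩, hk _, ?_⟩
    rw [lieTerm_form h2 hy hv, sgn_of_inter hU, sgn_of_not_inter (hv.not_inter h2)]
    ring

lemma lieTerm_sign (h1 : N.Assumption1) (h2 : N.Assumption2) (hk : ∀ r, 0 < k r)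
    (hy : ¬ N.inter y) {τ : ℝ} (hφ : N.SignCoherent y τ φ) (hφy : ∀ t, coeff (single y t) φ = 0)
    {w : σ} (hwy : w ≠ y) (w₀ : σ) (i : N.ι) (j : Fin (N.L i)) :
    0 ≤ -τ * N.sgn w * N.lieTerm k (single y s + single w 1) φ w₀ i j := by
  rcases lieTerm_cases h2 hy hφy hwy k s w₀ i j with h0 | ⟨s₀, δ, rfl, hop⟩
  · rw [h0, mul_zero]
  obtain ⟨c, hc, he⟩ := lieTerm_of_hop h1 h2 hk hy hop (φ := φ)
  rw [he]
  calc 0 ≤ c * (N.sgn w * N.sgn w) * (τ * N.sgn w₀ * coeff (single y s₀ + single w₀ 1) φ) := by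
        rw [sgn_mul_self, mul_one]
        exact mul_nonneg hc.le (hφ s₀ w₀ (hop.src_ne h2 hy))
    _ = _ := by ring

end TermOfHop

section Reach

variable {N : A1Network σ} {y z : σ}

lemma reach_zero_iff {w : σ} {d : ℕ} : N.Reach y z 0 w d ↔ w = z ∧ d = 0 := by
  constructor
  · rintro ⟨⟩
    exact ⟨rfl, rfl⟩
  · rintro ⟨rfl, rfl⟩
    exact Reach.refl

lemma reach_succ_iff {p : ℕ} {w' : σ} {d' : ℕ} :
    N.Reach y z (p + 1) w' d' ↔
      ∃ w d i j δ, N.Reach y z p w d ∧ N.Hop y i j w w' δ ∧ d' = d + δ := by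
  constructor
  · rintro (_ | ⟨hr, hop⟩)
    exact ⟨_, _, _, _, _, hr, hop, rfl⟩
  · rintro ⟨w, d, i, j, δ, hr, hop, rfl⟩
    exact hr.tail hop

lemma Reach.trans {p q : ℕ} {w v : σ} {d e : ℕ} (h : N.Reach y z p w d)
    (h' : N.Reach y w q v e) : N.Reach y z (p + q) v (d + e) := by
  induction h' with
  | refl => exact h
  | tail _ hop ih =>
    rw [← Nat.add_assoc, ← Nat.add_assoc]
    exact ih.tail hop

end Reach

section Support

variable [Fintype σ] [DecidableEq σ] {N : A1Network σ} {k : N.Param → ℝ} {y : σ}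

lemma deriv_zero (z : σ) : N.deriv k 0 z = X z := rfl

lemma deriv_succ (p : ℕ) (z : σ) : N.deriv k (p + 1) z = lieD (N.rhs k) (N.deriv k p z) := rfl

lemma coeff_lieD_single (h2 : N.Assumption2) (hy : ¬ N.inter y) (φ : MvPolynomial σ ℝ) (t : ℕ) :
    coeff (single y t) (lieD (N.rhs k) φ) = 0 := by
  rw [coeff_lieD_rhs]
  exact Finset.sum_eq_zero fun _ _ => lieTerm_single h2 hy

lemma coeff_deriv_single (h2 : N.Assumption2) (hy : ¬ N.inter y) {z : σ} (hzy : z ≠ y)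
    (p t : ℕ) : coeff (single y t) (N.deriv k p z) = 0 := by
  cases p with
  | zero =>
    have hne : single z 1 ≠ single y t := by
      rw [Ne, single_eq_single_iff]
      rintro (⟨h, -⟩ | ⟨h, -⟩)
      exacts [hzy h, one_ne_zero h]
    rw [deriv_zero, coeff_X, if_neg hne]
  | succ p => exact coeff_lieD_single h2 hy _ t

lemma SignCoherent.lieD (h1 : N.Assumption1) (h2 : N.Assumption2) (hk : ∀ r, 0 < k r)
    (hy : ¬ N.inter y) {τ : ℝ} {φ : MvPolynomial σ ℝ} (hφ : N.SignCoherent y τ φ)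
    (hφy : ∀ t, coeff (single y t) φ = 0) : N.SignCoherent y (-τ) (lieD (N.rhs k) φ) := by
  intro s w hwy
  rw [coeff_lieD_rhs, Finset.mul_sum]
  exact Finset.sum_nonneg fun q _ => lieTerm_sign h1 h2 hk hy hφ hφy hwy q.1 q.2.1 q.2.2

lemma coeff_lieD_ne_zero_iff (h1 : N.Assumption1) (h2 : N.Assumption2) (hk : ∀ r, 0 < k r)
    (hy : ¬ N.inter y) {τ : ℝ} (hτ : τ ≠ 0) {φ : MvPolynomial σ ℝ} (hφ : N.SignCoherent y τ φ)
    (hφy : ∀ t, coeff (single y t) φ = 0) {s : ℕ} {w : σ} (hwy : w ≠ y) :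
    coeff (single y s + single w 1) (lieD (N.rhs k) φ) ≠ 0 ↔
      ∃ w₀ s₀ i j δ, coeff (single y s₀ + single w₀ 1) φ ≠ 0 ∧ N.Hop y i j w₀ w δ ∧
        s = s₀ + δ := by
  have hτw : -τ * N.sgn w ≠ 0 := mul_ne_zero (neg_ne_zero.2 hτ) (N.sgn_ne_zero w)
  have hterms (q : σ × (Σ i, Fin (N.L i))) :
      0 ≤ -τ * N.sgn w * N.lieTerm k (single y s + single w 1) φ q.1 q.2.1 q.2.2 :=
    lieTerm_sign h1 h2 hk hy hφ hφy hwy q.1 q.2.1 q.2.2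
  rw [coeff_lieD_rhs, Fintype.sum_ne_zero_iff_of_mul_nonneg hτw hterms]
  constructor
  · rintro ⟨⟨w₀, i, j⟩, hq⟩
    rcases lieTerm_cases h2 hy hφy hwy k s w₀ i j with h0 | ⟨s₀, δ, rfl, hop⟩
    · exact absurd h0 hq
    obtain ⟨c, -, he⟩ := lieTerm_of_hop h1 h2 hk hy hop (φ := φ)
    refine ⟨w₀, s₀, i, j, δ, fun h0 => hq ?_, hop, rfl⟩
    rw [he, h0, mul_zero]
  · rintro ⟨w₀, s₀, i, j, δ, hne, hop, rfl⟩
    obtain ⟨c, hc, he⟩ := lieTerm_of_hop h1 h2 hk hy hop (φ := φ)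
    refine ⟨⟨w₀, i, j⟩, ?_⟩
    rw [he]
    exact mul_ne_zero (mul_ne_zero (neg_ne_zero.2 (mul_ne_zero (N.sgn_ne_zero w₀)
      (N.sgn_ne_zero w))) hc.ne') hne

lemma signCoherent_deriv (h1 : N.Assumption1) (h2 : N.Assumption2) (hk : ∀ r, 0 < k r)
    (hy : ¬ N.inter y) {z : σ} (hzy : z ≠ y) (p : ℕ) :
    N.SignCoherent y ((-1) ^ p * N.sgn z) (N.deriv k p z) := by
  induction p with
  | zero =>
    intro s w hwy
    rw [deriv_zero, coeff_X]
    split_ifs with h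
    · obtain ⟨-, rfl⟩ := (single_add_single_eq_single_iff hwy).1 h.symm
      nlinarith [N.sgn_mul_self w]
    · rw [mul_zero]
  | succ p ih =>
    rw [pow_succ, mul_neg_one, neg_mul, deriv_succ]
    exact ih.lieD h1 h2 hk hy (coeff_deriv_single h2 hy hzy p)

theorem coeff_deriv_ne_zero_iff (h1 : N.Assumption1) (h2 : N.Assumption2) (hk : ∀ r, 0 < k r)
    (hy : ¬ N.inter y) {z : σ} (hzy : z ≠ y) {p s : ℕ} {w : σ} (hwy : w ≠ y) :
    coeff (single y s + single w 1) (N.deriv k p z) ≠ 0 ↔ N.Reach y z p w s := by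
  induction p generalizing s w with
  | zero =>
    have h := single_add_single_eq_single_iff hwy (s := s) (z := z)
    rw [deriv_zero, coeff_X, reach_zero_iff]
    split_ifs with hz
    · simpa [and_comm, eq_comm] using h.1 hz.symm
    · simpa [and_comm, eq_comm] using mt h.2 (Ne.symm hz)
  | succ p ih =>
    have hτ : ((-1) ^ p * N.sgn z : ℝ) ≠ 0 := mul_ne_zero (by simp) (N.sgn_ne_zero z)
    rw [deriv_succ, coeff_lieD_ne_zero_iff h1 h2 hk hy hτ (signCoherent_deriv h1 h2 hk hy hzy p)
      (coeff_deriv_single h2 hy hzy p) hwy, reach_succ_iff]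
    constructor <;> rintro ⟨w₀, s₀, i, j, δ, h, hop, rfl⟩
    · exact ⟨w₀, s₀, i, j, δ, (ih (hop.src_ne h2 hy)).1 h, hop, rfl⟩
    · exact ⟨w₀, s₀, i, j, δ, (ih (hop.src_ne h2 hy)).2 h, hop, rfl⟩

end Support

section Exit

variable {N : A1Network σ} {y x : σ}

lemma Reach.exit_cases (h2 : N.Assumption2) (hx : ¬ N.inter x) {p : ℕ} {w : σ} {d : ℕ}
    (h : N.Reach y x p w d) :
    w = x ∨
    (∃ p₁ d₁ n, N.reactsTo w x ∧ N.Reach y x p₁ x d₁ ∧ N.Reach y x n w 0 ∧ 1 ≤ n ∧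
      p = p₁ + n ∧ d = d₁) ∨
    (∃ (i : N.ι) (j : Fin (N.L i)) (zw : σ) (p₁ d₁ n q d₂ : ℕ),
      N.reactsTo (N.U i (j + 1)) x ∧ N.IsReactant i j y zw ∧ zw ≠ x ∧
      N.Reach y x p₁ x d₁ ∧ N.Reach y x n zw 1 ∧ 2 ≤ n ∧ N.Reach y zw q w d₂ ∧
      p = p₁ + n + q ∧ d = d₁ + 1 + d₂) := by
  induction h with
  | refl => exact Or.inl rfl
  | @tail p w d i j w' δ hxw hop ih =>
    by_cases hw'x : w' = x
    · exact Or.inl hw'x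
    rcases ih with rfl | ⟨p₁, d₁, n, hrt, hpre, hmid, hn, hp, hd⟩ |
        ⟨i₀, j₀, zw, p₁, d₁, n, q, d₂, hrt, hr, hzx, hpre, hmid, hn, hpost, hp, hd⟩
    · cases hop with
      | decay | form => exact absurd (inter_U N i j) hx
      | release hadj hwy =>
        exact Or.inr (Or.inl ⟨p, d, 1, ⟨i, j, rfl, hadj⟩, hxw,
          Reach.refl.tail (Hop.release hadj hwy), le_rfl, rfl, rfl⟩)
      | bind => exact absurd rfl hw'x
    · have hw : N.inter w := by
        obtain ⟨i₀, j₀, rfl, -⟩ := hrt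
        exact inter_U N i₀ j₀
      cases hop with
      | decay =>
        exact Or.inr (Or.inl ⟨p₁, d₁, n + 1, hrt, hpre, hmid.tail Hop.decay, by omega, by omega,
          by omega⟩)
      | release hadj _ => exact absurd hw (h2.not_inter_of_eq_Y_or_S hadj)
      | bind hv => exact absurd hw (hv.not_inter h2)
      | form hv =>
        exact Or.inr (Or.inr ⟨i, j, w', p₁, d₁, n + 1, 0, 0, hrt, hv, hw'x, hpre,
          hmid.tail (Hop.form hv), by omega, Reach.refl, by omega, by omega⟩)
    · exact Or.inr (Or.inr ⟨i₀, j₀, zw, p₁, d₁, n, q + 1, d₂ + δ, hrt, hr, hzx, hpre, hmid, hn,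
        hpost.tail hop, by omega, by omega⟩)

/-- `zw` is the species entered right after the last visit of the walk to `x`, and the walk of
length `p'` is the given one with everything before that visit cut out. -/
lemma Reach.exists_exit (h2 : N.Assumption2) (hx : ¬ N.inter x) {p : ℕ} {w : σ} {d : ℕ}
    (hwx : w ≠ x) (hrt : ¬ N.reactsTo w x) (h : N.Reach y x p w d) :
    ∃ (i : N.ι) (j : Fin (N.L i)) (zw : σ) (q e p' : ℕ),
      N.reactsTo (N.U i (j + 1)) x ∧ N.IsReactant i j y zw ∧ zw ≠ x ∧
      N.Reach y zw q w e ∧ N.Reach y x p' w (e + 1) ∧ q + 2 ≤ p' ∧ p' ≤ p ∧ e < d ∧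
      (p' = p → e + 1 = d) := by
  rcases h.exit_cases h2 hx with rfl | ⟨-, -, -, hrt', -⟩ |
      ⟨i, j, zw, p₁, d₁, n, q, d₂, hxij, hr, hzx, hpre, hmid, hn, hpost, rfl, rfl⟩
  · exact absurd rfl hwx
  · exact absurd hrt' hrt
  refine ⟨i, j, zw, q, d₂, n + q, hxij, hr, hzx, hpost,
    by simpa [add_comm] using hmid.trans hpost, by omega, by omega, by omega, fun hp => ?_⟩
  obtain ⟨-, rfl⟩ := reach_zero_iff.1 (show N.Reach y x 0 x d₁ by
    rwa [show p₁ = 0 by omega] at hpre)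
  omega

end Exit

def InComponent (N : A1Network σ) (iu : N.ι) (w : σ) : Prop :=
  (∃ j, j ≤ N.L iu ∧ w = N.S iu j) ∨ ∃ j : Fin (N.L iu), w = N.U iu (j + 1)

section Enzyme

variable [DecidableEq σ] {N : A1Network σ} {y : σ} {iu : N.ι}

lemma Hop.inComponent_src (h1 : N.Assumption1) (h2 : N.Assumption2) (hyY : y = N.Y iu)
    {i : N.ι} {j : Fin (N.L i)} {w₀ w : σ} {δ : ℕ} (hop : N.Hop y i j w₀ w δ)
    (hw : N.InComponent iu w) : N.InComponent iu w₀ := by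
  cases hop with
  | decay | bind => exact hw
  | release hadj hwy =>
    rcases hw with ⟨j', hj', hU⟩ | ⟨j', hU⟩
    · exact absurd hU (h1.U_ne_S i j iu j' hj')
    obtain ⟨rfl, -⟩ := h1.U_inj i j iu j' hU
    rcases hadj with rfl | rfl | rfl
    · exact absurd hyY.symm hwy
    · exact Or.inl ⟨j, j.isLt.le, rfl⟩
    · exact Or.inl ⟨j + 1, j.isLt, rfl⟩
  | form hv =>
    rcases hw with ⟨jv, hjv, hvS⟩ | ⟨j', rfl⟩
    · obtain ⟨rfl, -⟩ := hv.eq_of_enzyme h1 h2 hyY hjv hvS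
      exact Or.inr ⟨j, rfl⟩
    · exact absurd (inter_U N iu j') (hv.not_inter h2)

lemma Reach.inComponent_start (h1 : N.Assumption1) (h2 : N.Assumption2) (hyY : y = N.Y iu)
    {z w : σ} {q e : ℕ} (h : N.Reach y z q w e) (hw : N.InComponent iu w) :
    N.InComponent iu z := by
  induction h with
  | refl => exact hw
  | tail _ hop ih => exact ih (hop.inComponent_src h1 h2 hyY hw)

lemma Reach.eq_of_enzyme (h1 : N.Assumption1) (h2 : N.Assumption2) (hyY : y = N.Y iu)
    {i : N.ι} {j : Fin (N.L i)} {zw : σ} (hr : N.IsReactant i j y zw) {ju : Fin (N.L iu)}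
    {q e : ℕ} (h : N.Reach y zw q (N.U iu (ju + 1)) e) : i = iu ∧ y = N.Y i := by
  rcases h.inComponent_start h1 h2 hyY (Or.inr ⟨ju, rfl⟩) with ⟨jv, hjv, hzw⟩ | ⟨j', hzw⟩
  · exact hr.eq_of_enzyme h1 h2 hyY hjv hzw
  · exact absurd (hzw ▸ inter_U N iu j') (hr.not_inter h2)

end Enzyme

variable [Fintype σ] [DecidableEq σ]

theorem monomial_y_pow_u_structure_general
    (N : A1Network σ) (h1 : N.Assumption1) (h2 : N.Assumption2)
    (k : N.Param → ℝ) (hk : ∀ r, 0 < k r)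
    (u x y : σ) (iu : N.ι) (ju : Fin (N.L iu)) (hu : u = N.U iu ((ju : ℕ) + 1))
    (hx : ¬ N.inter x) (hy : ¬ N.inter y) (hyx : y ≠ x)
    (r ℓ : ℕ)
    (happ : MvPolynomial.coeff (Finsupp.single y r + Finsupp.single u 1)
      (N.deriv k ℓ x) ≠ 0) :
    (N.reactsTo u x ∨
      (2 ≤ ℓ ∧ ∃ i, ∃ j : Fin (N.L i), ∃ zw : σ,
        zw ≠ x ∧
        ((y = N.Y i ∧ zw = N.S i (j : ℕ)) ∨ (y = N.S i (j : ℕ) ∧ zw = N.Y i)) ∧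
        (x = N.Y i ∨ x = N.S i ((j : ℕ) + 1)) ∧
        (y = N.Y iu →
          (∃ j', j' ≤ N.L iu ∧ x = N.S iu j') ∧
            i = iu ∧ y = N.Y i ∧ x = N.S i ((j : ℕ) + 1)) ∧
        ∃ t, t < r ∧ ∃ ii, ii ≤ ℓ - 2 ∧
          MvPolynomial.coeff (Finsupp.single y t + Finsupp.single u 1)
            (N.deriv k ii zw) ≠ 0))
    ∧ (¬ N.reactsTo u x →
        (∀ ℓ' < ℓ, ∀ r' : ℕ,
          MvPolynomial.coeff (Finsupp.single y r' + Finsupp.single u 1)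
            (N.deriv k ℓ' x) = 0) →
        1 ≤ r ∧ 2 ≤ ℓ ∧ ∃ i, ∃ j : Fin (N.L i), ∃ zw : σ,
          zw ≠ x ∧
          ((y = N.Y i ∧ zw = N.S i (j : ℕ)) ∨ (y = N.S i (j : ℕ) ∧ zw = N.Y i)) ∧
          (x = N.Y i ∨ x = N.S i ((j : ℕ) + 1)) ∧
          ∃ ii, ii ≤ ℓ - 2 ∧
            MvPolynomial.coeff (Finsupp.single y (r - 1) + Finsupp.single u 1)
              (N.deriv k ii zw) ≠ 0) := by
  subst hu
  have hux : N.U iu (ju + 1) ≠ x := U_ne_of_not_inter hx iu ju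
  have huy : N.U iu (ju + 1) ≠ y := U_ne_of_not_inter hy iu ju
  by_cases hrt : N.reactsTo (N.U iu (ju + 1)) x
  · exact ⟨Or.inl hrt, fun h => absurd hrt h⟩
  obtain ⟨i, j, zw, q, e, p', hxij, hr, hzx, hzu, hxu, hq, hp', he, hlast⟩ :=
    ((coeff_deriv_ne_zero_iff h1 h2 hk hy hyx.symm huy).1 happ).exists_exit h2 hx hux hrt
  have hxS : x = N.S i (j + 1) := h1.eq_S_succ_of_reactsTo hxij hr hyx hzx
  have hzu' := (coeff_deriv_ne_zero_iff h1 h2 hk hy (hr.ne h2) huy).2 hzu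
  refine ⟨Or.inr ⟨by omega, i, j, zw, hzx, hr, Or.inr hxS, fun hyY => ?_, e, he, q, by omega,
    hzu'⟩, fun _ hmin => ?_⟩
  · obtain ⟨rfl, hyi⟩ := hzu.eq_of_enzyme h1 h2 hyY hr
    exact ⟨⟨j + 1, j.isLt, hxS⟩, rfl, hyi, hxS⟩
  · have hp : p' = ℓ := by
      by_contra hne
      exact (coeff_deriv_ne_zero_iff h1 h2 hk hy hyx.symm huy).2 hxu
        (hmin p' (by omega) (e + 1))
    have hre : r - 1 = e := by have := hlast hp; omega
    exact ⟨by omega, by omega, i, j, zw, hzx, hr, Or.inr hxS, q, by omega, hre ▸ hzu'⟩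

/-- **Lemma.** For a network satisfying Assumptions 1 and 2, let `u` be the intermediate
of block `ju+1` of component `iu`, and `x`, `y` non-intermediates with `y ≠ x`. If the
monomial `y^r · u` appears in `x^{(ℓ)}`, `ℓ ≥ 1`, then either `u` reacts to `x`, or
`ℓ ≥ 2` and the network contains a block of reactions `Y + Z_w ⇄ W → Z̃_w + X` with
`Z_w ≠ X` (in Assumption-1 form: some block `j+1` of a component `i`, with
`{y, z_w} = {Y i, S i j}` and `x` one of the species of the product complex
`Y i + S i (j+1)`), and a monomial `y^t · u` with `t < r` appears in `z_w^{(i)}` for some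
`i ≤ ℓ - 2`. If in addition `y` acts as the enzyme of the component of `u`, then
`x ∈ 𝒮_U`, the block is `Y + Z_w ⇄ W → Y + X` and it lies in the component of `u`.
Moreover, if `u` does not react to `x` and `ℓ` is smallest such that some monomial
`y^r · u` appears in `x^{(ℓ)}`, then `r ≥ 1`, `ℓ ≥ 2`, and `y^{r-1} · u` appears in
`z_w^{(i)}` for some `i ≤ ℓ - 2`. -/
theorem monomial_y_pow_u_structure
    (N : A1Network σ) (h1 : N.Assumption1) (h2 : N.Assumption2)
    (k : N.Param → ℝ) (hk : ∀ r, 0 < k r)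
    (u x y : σ) (iu : N.ι) (ju : Fin (N.L iu)) (hu : u = N.U iu ((ju : ℕ) + 1))
    (hx : ¬ N.inter x) (hy : ¬ N.inter y) (hyx : y ≠ x)
    (r ℓ : ℕ) (hℓ : 1 ≤ ℓ)
    (happ : MvPolynomial.coeff (Finsupp.single y r + Finsupp.single u 1)
      (N.deriv k ℓ x) ≠ 0) :
    (N.reactsTo u x ∨
      (2 ≤ ℓ ∧ ∃ i, ∃ j : Fin (N.L i), ∃ zw : σ,
        zw ≠ x ∧
        ((y = N.Y i ∧ zw = N.S i (j : ℕ)) ∨ (y = N.S i (j : ℕ) ∧ zw = N.Y i)) ∧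
        (x = N.Y i ∨ x = N.S i ((j : ℕ) + 1)) ∧
        (y = N.Y iu →
          (∃ j', j' ≤ N.L iu ∧ x = N.S iu j') ∧
            i = iu ∧ y = N.Y i ∧ x = N.S i ((j : ℕ) + 1)) ∧
        ∃ t, t < r ∧ ∃ ii, ii ≤ ℓ - 2 ∧
          MvPolynomial.coeff (Finsupp.single y t + Finsupp.single u 1)
            (N.deriv k ii zw) ≠ 0))
    ∧ (¬ N.reactsTo u x →
        (∀ ℓ' < ℓ, ∀ r' : ℕ,
          MvPolynomial.coeff (Finsupp.single y r' + Finsupp.single u 1)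
            (N.deriv k ℓ' x) = 0) →
        1 ≤ r ∧ 2 ≤ ℓ ∧ ∃ i, ∃ j : Fin (N.L i), ∃ zw : σ,
          zw ≠ x ∧
          ((y = N.Y i ∧ zw = N.S i (j : ℕ)) ∨ (y = N.S i (j : ℕ) ∧ zw = N.Y i)) ∧
          (x = N.Y i ∨ x = N.S i ((j : ℕ) + 1)) ∧
          ∃ ii, ii ≤ ℓ - 2 ∧
            MvPolynomial.coeff (Finsupp.single y (r - 1) + Finsupp.single u 1)
              (N.deriv k ii zw) ≠ 0) :=
  monomial_y_pow_u_structure_general N h1 h2 k hk u x y iu ju hu hx hy hyx r ℓ happ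

end A1Network
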